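/- Let μ and ν be integer partitions of n and let g ≥ 0 be an integer. Then the number of pairs (α, β) ∈ S_n × S_n such that α has cycle type μ, the product αβ has cycle type ν, #μ + #β + #ν − n = 2 − 2g, and the subgroup generated by α and β acts transitively on [n], equals the strictly monotone double Hurwitz number H^↑↑_g(μ,ν). -/

import Mathlib

/-!
Common definitions: permutations of `Fin n` play the role of the symmetric
group `S_n` on `[n] = {1,…,n}` (0-indexed).
-/

/-- The number of cycles of a permutation of `Fin n`, fixed points counted as cycles:
the number of fixed points plus the number of nontrivial cycles. -/
def cycleCount {n : ℕ} (σ : Equiv.Perm (Fin n)) : ℕ :=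
  (n - σ.support.card) + Multiset.card σ.cycleType

/-- The top (largest moved point) of a permutation, as a natural number
(via `Fin.val`).  For a transposition `(a b)` with `a < b` this is `b`. -/
def top {n : ℕ} (τ : Equiv.Perm (Fin n)) : ℕ :=
  τ.support.sup Fin.val

/-- The ordered product `f 0 * f 1 * ⋯ * f (r-1)` of a tuple of permutations. -/
def tupleProd {n r : ℕ} (f : Fin r → Equiv.Perm (Fin n)) : Equiv.Perm (Fin n) :=
  (List.ofFn f).prod

/-- A tuple all of whose entries are transpositions. -/
def IsTranspositionTuple {n r : ℕ} (f : Fin r → Equiv.Perm (Fin n)) : Prop :=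
  ∀ i, (f i).IsSwap

/-- A weakly monotone tuple of transpositions: the tops are weakly increasing. -/
def WeaklyMonotoneTuple {n r : ℕ} (f : Fin r → Equiv.Perm (Fin n)) : Prop :=
  IsTranspositionTuple f ∧ ∀ i j : Fin r, i ≤ j → top (f i) ≤ top (f j)

/-- A strictly monotone tuple of transpositions: the tops are strictly increasing. -/
def StrictlyMonotoneTuple {n r : ℕ} (f : Fin r → Equiv.Perm (Fin n)) : Prop :=
  IsTranspositionTuple f ∧ ∀ i j : Fin r, i < j → top (f i) < top (f j)

/-- The subgroup generated by a set of permutations acts transitively on `Fin n`. -/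
def ActsTransitively {n : ℕ} (S : Set (Equiv.Perm (Fin n))) : Prop :=
  ∀ x y : Fin n, ∃ g ∈ Subgroup.closure S, g x = y

/-- The Jucys–Murphy element `J_i = ∑_{j<i} (j i)` in the group algebra `ℂ[S_n]`
(`J_1 = 0` for the smallest index). -/
noncomputable def JM (n : ℕ) (i : Fin n) : MonoidAlgebra ℂ (Equiv.Perm (Fin n)) :=
  ∑ j ∈ Finset.Iio i, MonoidAlgebra.of ℂ (Equiv.Perm (Fin n)) (Equiv.swap j i)

/-- `Ω_{n,z} = ∑_{σ ∈ S_n} z^{#σ} σ` in the group algebra `ℂ[S_n]`. -/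
noncomputable def Omega (n : ℕ) (z : ℂ) : MonoidAlgebra ℂ (Equiv.Perm (Fin n)) :=
  ∑ σ : Equiv.Perm (Fin n), z ^ cycleCount σ • MonoidAlgebra.of ℂ (Equiv.Perm (Fin n)) σ

/-- The cycle type of a permutation as a partition of `n`: the multiset of cycle
lengths, fixed points contributing parts equal to `1`. -/
def fullCycleType {n : ℕ} (σ : Equiv.Perm (Fin n)) : Multiset ℕ :=
  σ.cycleType + Multiset.replicate (n - σ.support.card) 1

/-- The strictly monotone double Hurwitz number `H^↑↑_g(μ,ν)`: the number of tuples
`(α, τ_1, …, τ_r, β)` with `r = #μ + #ν + 2g - 2`, where `α` has cycle type `μ`,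
`β = α τ_1 ⋯ τ_r` has cycle type `ν`, the `τ_i` are transpositions forming a strictly
monotone tuple, and `⟨α, τ_1, …, τ_r⟩` acts transitively on `[n]`.  (Such a tuple is
determined by the pair `(α, (τ_1,…,τ_r))`.) -/
noncomputable def strictHurwitz (n g : ℕ) (μ ν : n.Partition) : ℕ :=
  Nat.card {p : Equiv.Perm (Fin n) ×
      (Fin (Multiset.card μ.parts + Multiset.card ν.parts + 2 * g - 2) →
        Equiv.Perm (Fin n)) //
    fullCycleType p.1 = μ.parts ∧
    fullCycleType (p.1 * tupleProd p.2) = ν.parts ∧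
    StrictlyMonotoneTuple p.2 ∧
    ActsTransitively ({p.1} ∪ Set.range p.2)}

/-- The (weakly) monotone double Hurwitz number `H^↑_g(μ,ν)`: as `strictHurwitz`, with
the weak monotonicity condition instead. -/
noncomputable def monotoneHurwitz (n g : ℕ) (μ ν : n.Partition) : ℕ :=
  Nat.card {p : Equiv.Perm (Fin n) ×
      (Fin (Multiset.card μ.parts + Multiset.card ν.parts + 2 * g - 2) →
        Equiv.Perm (Fin n)) //
    fullCycleType p.1 = μ.parts ∧
    fullCycleType (p.1 * tupleProd p.2) = ν.parts ∧
    WeaklyMonotoneTuple p.2 ∧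
    ActsTransitively ({p.1} ∪ Set.range p.2)}

/-!
Every permutation `σ` of `Fin n` has exactly one factorization into transpositions with strictly
increasing tops: its last factor must be `(σ⁻¹ b, b)` with `b` the largest point moved by `σ`,
and multiplying `σ` by this transposition turns `b` into a fixed point and raises the number of
cycles by one, so the factorization has `n - #σ` factors. Each factor only permutes points inside
one cycle of the product, so `⟨α, τ_1, …, τ_r⟩` and `⟨α, τ_1 ⋯ τ_r⟩` have the same orbits.
Hence `(α, τ) ↦ (α, τ_1 ⋯ τ_r)` is a bijection onto the pairs `(α, β)` on the left, the genus
condition there being `r = n - #β`.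
-/

namespace Equiv.Perm

variable {α : Type*}

theorem SameCycle.of_forall_sameCycle_apply {f g : Perm α} (hfg : ∀ z, g.SameCycle z (f z))
    {x y : α} (h : f.SameCycle x y) : g.SameCycle x y := by
  obtain ⟨k, rfl⟩ := h
  induction k using Int.induction_on with
  | zero => exact SameCycle.refl g x
  | succ k ih =>
    rw [add_comm, zpow_add, zpow_one, mul_apply]
    exact ih.trans (hfg _)
  | pred k ih =>
    rw [sub_eq_neg_add, zpow_add, zpow_neg_one, mul_apply]
    refine ih.trans ?_
    simpa only [coe_inv, apply_symm_apply] using (hfg (f⁻¹ ((f ^ (-(k : ℤ))) x))).symm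

theorem IsSwap.exists_lt [LinearOrder α] {τ : Perm α} (h : τ.IsSwap) :
    ∃ a b, a < b ∧ τ = swap a b := by
  obtain ⟨x, y, hxy, rfl⟩ := h
  rcases hxy.lt_or_gt with h | h
  · exact ⟨x, y, h, rfl⟩
  · exact ⟨y, x, h, swap_comm x y⟩

variable [DecidableEq α]

theorem sameCycle_swap_apply_of_apply_eq {σ : Perm α} {a b : α} (h : σ a = b) (x : α) :
    σ.SameCycle x (swap a b x) := by
  have hab : σ.SameCycle a b := ⟨1, by simpa using h⟩
  by_cases hxa : x = a
  · rw [hxa, swap_apply_left]; exact hab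
  by_cases hxb : x = b
  · rw [hxb, swap_apply_right]; exact hab.symm
  · rw [swap_apply_of_ne_of_ne hxa hxb]

theorem sameCycle_mul_swap_apply {π : Perm α} {a b : α} (hb : π b = b) (z : α) :
    (π * swap a b).SameCycle z (π z) := by
  by_cases hza : z = a
  · subst hza
    refine ⟨2, ?_⟩
    rw [zpow_two]
    simp [hb]
  by_cases hzb : z = b
  · subst hzb
    rw [hb]
  · exact ⟨1, by simp [swap_apply_of_ne_of_ne hza hzb]⟩

theorem isCycle_mul_swap {c : Perm α} (hc : c.IsCycle) {a b : α} (ha : c a ≠ a) (hb : c b = b) :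
    (c * swap a b).IsCycle := by
  have hab : a ≠ b := by rintro rfl; exact ha hb
  have hσa : (c * swap a b) a = b := by simp [hb]
  refine ⟨a, by rw [hσa]; exact hab.symm, fun y hy => ?_⟩
  by_cases hyb : y = b
  · subst hyb
    exact ⟨1, by simpa using hσa⟩
  by_cases hya : y = a
  · exact hya ▸ SameCycle.refl _ _
  rw [mul_apply, swap_apply_of_ne_of_ne hya hyb] at hy
  exact (hc.sameCycle ha hy).of_forall_sameCycle_apply (sameCycle_mul_swap_apply hb)

variable [Fintype α]

theorem support_mul_swap_of_apply_ne {π : Perm α} {a b : α} (ha : π a ≠ a) (hb : π b = b) :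
    (π * swap a b).support = insert b π.support := by
  have hab : a ≠ b := by rintro rfl; exact ha hb
  ext x
  by_cases hxa : x = a
  · subst hxa
    simp [hb, hab.symm, ha]
  by_cases hxb : x = b
  · subst hxb
    simp only [mem_support, mul_apply, swap_apply_right, Finset.mem_insert, true_or, iff_true]
    rw [← hb]
    exact π.injective.ne hab
  · simp [swap_apply_of_ne_of_ne hxa hxb, hxb]

theorem card_cycleType_mul_swap_of_apply_ne {π : Perm α} {a b : α} (ha : π a ≠ a)
    (hb : π b = b) : Multiset.card (π * swap a b).cycleType = Multiset.card π.cycleType := by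
  set c := π.cycleOf a
  set d := π * c⁻¹
  have hcd : Disjoint d c :=
    disjoint_mul_inv_of_mem_cycleFactorsFinset (cycleOf_mem_cycleFactorsFinset_iff.mpr
      (mem_support.mpr ha))
  have hc : c.IsCycle := π.isCycle_cycleOf ha
  have hca : c a ≠ a := by rwa [π.cycleOf_apply_self]
  have hcb : c b = b :=
    cycleOf_apply_of_not_sameCycle fun h => ha (h.apply_eq_self_iff.mpr hb)
  have hdc' : Disjoint d (c * swap a b) := by
    intro x
    by_cases hxa : x = a
    · exact Or.inl ((hcd x).resolve_right (hxa ▸ hca))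
    by_cases hxb : x = b
    · left
      rw [hxb, mul_apply, inv_eq_iff_eq.mpr hcb.symm, hb]
    · rw [mul_apply (f := c), swap_apply_of_ne_of_ne hxa hxb]
      exact hcd x
  rw [show π = d * c by simp [d], mul_assoc, hdc'.cycleType_mul, hcd.cycleType_mul,
    Multiset.card_add, Multiset.card_add, card_cycleType_eq_one.mpr hc,
    card_cycleType_eq_one.mpr (isCycle_mul_swap hc hca hcb)]

end Equiv.Perm

theorem Nat.Partition.card_parts_pos {n : ℕ} (hn : 0 < n) (μ : n.Partition) :
    0 < Multiset.card μ.parts :=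
  Multiset.card_pos.mpr fun h0 => hn.ne' (by simpa [h0] using μ.parts_sum.symm)

section StrictlyMonotone

open Equiv Equiv.Perm

variable {n : ℕ}

theorem cycleCount_mul_swap {π : Perm (Fin n)} {a b : Fin n} (hab : a ≠ b) (hb : π b = b) :
    cycleCount (π * swap a b) + 1 = cycleCount π := by
  have hle := Finset.card_le_univ (π * swap a b).support
  rw [Fintype.card_fin] at hle
  unfold cycleCount
  by_cases ha : π a = a
  · have hd : Disjoint π (swap a b) := fun x => by
      by_cases hxa : x = a
      · exact Or.inl (hxa ▸ ha)
      by_cases hxb : x = b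
      · exact Or.inl (hxb ▸ hb)
      · exact Or.inr (swap_apply_of_ne_of_ne hxa hxb)
    rw [hd.card_support_mul, card_support_swap hab] at hle ⊢
    rw [hd.cycleType_mul, Multiset.card_add, card_cycleType_eq_one.mpr (isCycle_swap hab)]
    omega
  · have hbπ : b ∉ π.support := notMem_support.mpr hb
    rw [support_mul_swap_of_apply_ne ha hb, Finset.card_insert_of_notMem hbπ] at hle ⊢
    rw [card_cycleType_mul_swap_of_apply_ne ha hb]
    omega

theorem apply_eq_self_of_top_lt {τ : Perm (Fin n)} {x : Fin n} (h : top τ < x.val) : τ x = x :=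
  notMem_support.mp fun hx => h.not_ge (Finset.le_sup hx)

theorem top_eq_of_mem_support {σ : Perm (Fin n)} {b : Fin n} (hb : b ∈ σ.support)
    (h : ∀ x ∈ σ.support, x ≤ b) : top σ = b.val :=
  le_antisymm (Finset.sup_le fun x hx => h x hx) (Finset.le_sup hb)

theorem top_swap {a b : Fin n} (hab : a < b) : top (swap a b) = b.val :=
  top_eq_of_mem_support (by simp [support_swap hab.ne]) fun x hx => by
    rw [support_swap hab.ne, Finset.mem_insert, Finset.mem_singleton] at hx
    rcases hx with rfl | rfl
    exacts [hab.le, le_rfl]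

theorem list_prod_apply_eq_self_of_forall_top_lt {l : List (Perm (Fin n))} {x : Fin n}
    (h : ∀ τ ∈ l, top τ < x.val) : l.prod x = x := by
  induction l with
  | nil => rfl
  | cons τ l ih =>
    rw [List.prod_cons, mul_apply, ih fun τ' h' => h τ' (List.mem_cons_of_mem _ h'),
      apply_eq_self_of_top_lt (h τ List.mem_cons_self)]

theorem prod_append_swap_apply_left {l : List (Perm (Fin n))} {a b : Fin n}
    (hl : ∀ τ ∈ l, top τ < b.val) : (l ++ [swap a b]).prod a = b := by
  simp [list_prod_apply_eq_self_of_forall_top_lt hl]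

theorem top_prod_append_swap {l : List (Perm (Fin n))} {a b : Fin n} (hab : a < b)
    (hl : ∀ τ ∈ l, top τ < b.val) : top (l ++ [swap a b]).prod = b.val := by
  have hb : l.prod b = b := list_prod_apply_eq_self_of_forall_top_lt hl
  rw [List.prod_append, List.prod_singleton]
  refine top_eq_of_mem_support ?_ fun x hx => not_lt.mp fun hbx => mem_support.mp hx ?_
  · rw [mem_support, mul_apply, swap_apply_right, ← hb]
    exact l.prod.injective.ne hab.ne
  · rw [mul_apply, swap_apply_of_ne_of_ne (hab.trans hbx).ne' hbx.ne']
    exact list_prod_apply_eq_self_of_forall_top_lt fun τ hτ => (hl τ hτ).trans hbx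

def StrictlyMonotoneList (l : List (Perm (Fin n))) : Prop :=
  (∀ τ ∈ l, τ.IsSwap) ∧ (l.map top).Pairwise (· < ·)

theorem strictlyMonotoneTuple_iff {r : ℕ} {f : Fin r → Perm (Fin n)} :
    StrictlyMonotoneTuple f ↔ StrictlyMonotoneList (List.ofFn f) := by
  simp only [StrictlyMonotoneTuple, IsTranspositionTuple, StrictlyMonotoneList,
    List.forall_mem_ofFn_iff, List.map_ofFn, List.pairwise_ofFn, Function.comp_apply]

theorem strictlyMonotoneList_append_singleton {l : List (Perm (Fin n))} {τ : Perm (Fin n)} :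
    StrictlyMonotoneList (l ++ [τ]) ↔
      StrictlyMonotoneList l ∧ τ.IsSwap ∧ ∀ τ' ∈ l, top τ' < top τ := by
  simp only [StrictlyMonotoneList, List.forall_mem_append,
    List.map_append, List.map_singleton, List.pairwise_append, List.pairwise_singleton,
    List.mem_map, List.mem_singleton]
  grind

namespace StrictlyMonotoneList

theorem eq_nil_or_eq_append_swap {l : List (Perm (Fin n))} (h : StrictlyMonotoneList l) :
    l = [] ∨ ∃ l' a b, a < b ∧ (∀ τ ∈ l', top τ < b.val) ∧ StrictlyMonotoneList l' ∧
      l = l' ++ [swap a b] := by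
  obtain rfl | ⟨l', τ, rfl⟩ := l.eq_nil_or_concat'
  · exact Or.inl rfl
  obtain ⟨hl', hτ, htop⟩ := strictlyMonotoneList_append_singleton.mp h
  obtain ⟨a, b, hab, rfl⟩ := hτ.exists_lt
  exact Or.inr ⟨l', a, b, hab, top_swap hab ▸ htop, hl', rfl⟩

theorem induction {motive : (l : List (Perm (Fin n))) → StrictlyMonotoneList l → Prop}
    (nil : motive [] ⟨by simp, List.Pairwise.nil⟩)
    (append_swap : ∀ l a b (hab : a < b) (htop : ∀ τ ∈ l, top τ < b.val)
      (hl : StrictlyMonotoneList l), motive l hl →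
        motive (l ++ [swap a b]) (strictlyMonotoneList_append_singleton.mpr
          ⟨hl, ⟨a, b, hab.ne, rfl⟩, top_swap hab ▸ htop⟩))
    (l : List (Perm (Fin n))) (h : StrictlyMonotoneList l) : motive l h := by
  induction l using List.reverseRecOn with
  | nil => exact nil
  | append_singleton l τ ih =>
    obtain ⟨hl, hτ, htop⟩ := strictlyMonotoneList_append_singleton.mp h
    obtain ⟨a, b, hab, rfl⟩ := hτ.exists_lt
    exact append_swap l a b hab (top_swap hab ▸ htop) hl (ih hl)

theorem prod_eq_one_iff {l : List (Perm (Fin n))} (h : StrictlyMonotoneList l) :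
    l.prod = 1 ↔ l = [] := by
  refine ⟨fun hp => ?_, fun hl => hl ▸ List.prod_nil⟩
  obtain rfl | ⟨l', a, b, hab, htop, -, rfl⟩ := h.eq_nil_or_eq_append_swap
  · rfl
  · have := prod_append_swap_apply_left (a := a) htop
    rw [hp, one_apply] at this
    exact absurd this hab.ne

theorem eq_of_prod_eq {l₁ l₂ : List (Perm (Fin n))} (h₁ : StrictlyMonotoneList l₁)
    (h₂ : StrictlyMonotoneList l₂) (hp : l₁.prod = l₂.prod) : l₁ = l₂ := by
  induction l₁, h₁ using StrictlyMonotoneList.induction generalizing l₂ with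
  | nil => exact ((h₂.prod_eq_one_iff).mp hp.symm).symm
  | append_swap m₁ a₁ b₁ hab₁ htop₁ hm₁ ih =>
    obtain rfl | ⟨m₂, a₂, b₂, hab₂, htop₂, hm₂, rfl⟩ := h₂.eq_nil_or_eq_append_swap
    · have := prod_append_swap_apply_left (a := a₁) htop₁
      rw [hp, List.prod_nil, one_apply] at this
      exact absurd this hab₁.ne
    obtain rfl : b₁ = b₂ := Fin.ext <|
      (top_prod_append_swap hab₁ htop₁).symm.trans (hp ▸ top_prod_append_swap hab₂ htop₂)
    obtain rfl : a₁ = a₂ := (m₁ ++ [swap a₁ b₁]).prod.injective <|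
      (prod_append_swap_apply_left htop₁).trans (hp ▸ prod_append_swap_apply_left htop₂).symm
    simp only [List.prod_append, List.prod_singleton, mul_left_inj] at hp
    rw [ih hm₂ hp]

theorem length_add_cycleCount_prod {l : List (Perm (Fin n))} (h : StrictlyMonotoneList l) :
    l.length + cycleCount l.prod = n := by
  induction l, h using StrictlyMonotoneList.induction with
  | nil => simp [cycleCount]
  | append_swap l a b hab htop hl ih =>
    have := cycleCount_mul_swap hab.ne (list_prod_apply_eq_self_of_forall_top_lt htop)
    rw [List.length_append, List.prod_append, List.prod_singleton, List.length_singleton]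
    omega

theorem top_le_top_prod {l : List (Perm (Fin n))} (h : StrictlyMonotoneList l) :
    ∀ τ ∈ l, top τ ≤ top l.prod := by
  induction l, h using StrictlyMonotoneList.induction with
  | nil => simp
  | append_swap l a b hab htop hl ih =>
    rw [top_prod_append_swap hab htop]
    intro τ hτ
    rcases List.mem_append.mp hτ with hτ | hτ
    · exact (htop τ hτ).le
    · rw [List.mem_singleton.mp hτ, top_swap hab]

theorem sameCycle_prod_apply {l : List (Perm (Fin n))} (h : StrictlyMonotoneList l) :
    ∀ τ ∈ l, ∀ x, l.prod.SameCycle x (τ x) := by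
  induction l, h using StrictlyMonotoneList.induction with
  | nil => simp
  | append_swap l a b hab htop hl ih =>
    intro τ hτ x
    rcases List.mem_append.mp hτ with hτ | hτ
    · rw [List.prod_append, List.prod_singleton]
      exact (ih τ hτ x).of_forall_sameCycle_apply
        (sameCycle_mul_swap_apply (list_prod_apply_eq_self_of_forall_top_lt htop))
    · rw [List.mem_singleton.mp hτ]
      exact sameCycle_swap_apply_of_apply_eq (prod_append_swap_apply_left htop) x

end StrictlyMonotoneList

theorem exists_strictlyMonotoneList_prod_eq (σ : Perm (Fin n)) :
    ∃ l, StrictlyMonotoneList l ∧ l.prod = σ := by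
  induction hσ : top σ using Nat.strong_induction_on generalizing σ with
  | _ t ih =>
  subst hσ
  by_cases h1 : σ = 1
  · exact ⟨[], ⟨by simp, List.Pairwise.nil⟩, h1 ▸ List.prod_nil⟩
  have hne : σ.support.Nonempty := Finset.nonempty_of_ne_empty (mt support_eq_empty_iff.mp h1)
  set b := σ.support.max' hne
  have hb : b ∈ σ.support := σ.support.max'_mem hne
  have hmax : ∀ x ∈ σ.support, x ≤ b := fun x hx => σ.support.le_max' x hx
  set a := σ⁻¹ b
  have hσa : σ a = b := σ.apply_symm_apply b
  have hab : a < b := by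
    have hab : a ≠ b := fun h => mem_support.mp hb (h ▸ hσa)
    exact (hmax a (by rw [mem_support, hσa]; exact hab.symm)).lt_of_ne hab
  set σ' := σ * swap a b
  have hσ' : ∀ x ∈ σ'.support, x.val < b.val := by
    intro x hx
    have hxb : x ≠ b := by rintro rfl; simp [σ', hσa] at hx
    by_cases hxa : x = a
    · exact hxa ▸ hab
    · refine (hmax x ?_).lt_of_ne hxb
      simpa [σ', swap_apply_of_ne_of_ne hxa hxb] using hx
  have htop : top σ' < b.val :=
    (Finset.sup_lt_iff (lt_of_le_of_lt (Nat.zero_le _) hab)).mpr hσ'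
  obtain ⟨l, hl, hlσ⟩ := ih _ (top_eq_of_mem_support hb hmax ▸ htop) σ' rfl
  refine ⟨l ++ [swap a b], strictlyMonotoneList_append_singleton.mpr
    ⟨hl, ⟨a, b, hab.ne, rfl⟩, fun τ hτ => ?_⟩, ?_⟩
  · rw [top_swap hab]
    exact (hlσ ▸ hl.top_le_top_prod τ hτ).trans_lt htop
  · rw [List.prod_append, hlσ, List.prod_singleton, mul_swap_mul_self]

theorem ActsTransitively.of_forall_exists_mem_closure {S T : Set (Perm (Fin n))}
    (h : ActsTransitively S) (hST : ∀ s ∈ S, ∀ x, ∃ t ∈ Subgroup.closure T, t x = s x) :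
    ActsTransitively T := by
  suffices hcl : ∀ s ∈ Subgroup.closure S, ∀ x, ∃ t ∈ Subgroup.closure T, t x = s x by
    intro x y
    obtain ⟨s, hs, rfl⟩ := h x y
    exact hcl s hs x
  intro s hs
  induction hs using Subgroup.closure_induction with
  | mem s hs => exact hST s hs
  | one => exact fun x => ⟨1, one_mem _, rfl⟩
  | mul u v _ _ hu hv =>
    intro x
    obtain ⟨t₂, ht₂, h₂⟩ := hv x
    obtain ⟨t₁, ht₁, h₁⟩ := hu (v x)
    exact ⟨t₁ * t₂, mul_mem ht₁ ht₂, by rw [mul_apply, mul_apply, h₂, h₁]⟩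
  | inv u _ hu =>
    intro x
    obtain ⟨t, ht, htu⟩ := hu (u⁻¹ x)
    exact ⟨t⁻¹, inv_mem ht, inv_eq_iff_eq.mpr (htu.trans (by simp)).symm⟩

namespace StrictlyMonotoneTuple

variable {r : ℕ}

theorem length_add_cycleCount {f : Fin r → Perm (Fin n)} (hf : StrictlyMonotoneTuple f) :
    r + cycleCount (tupleProd f) = n := by
  simpa [tupleProd] using (strictlyMonotoneTuple_iff.mp hf).length_add_cycleCount_prod

theorem eq_of_tupleProd_eq {f g : Fin r → Perm (Fin n)} (hf : StrictlyMonotoneTuple f)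
    (hg : StrictlyMonotoneTuple g) (h : tupleProd f = tupleProd g) : f = g :=
  List.ofFn_injective <|
    (strictlyMonotoneTuple_iff.mp hf).eq_of_prod_eq (strictlyMonotoneTuple_iff.mp hg) h

theorem actsTransitively_iff {f : Fin r → Perm (Fin n)} (hf : StrictlyMonotoneTuple f)
    (α : Perm (Fin n)) :
    ActsTransitively ({α} ∪ Set.range f) ↔ ActsTransitively {α, tupleProd f} := by
  constructor <;> refine fun h => h.of_forall_exists_mem_closure ?_
  · rintro s (rfl | ⟨i, rfl⟩) x
    · exact ⟨s, Subgroup.subset_closure (Set.mem_insert _ _), rfl⟩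
    · obtain ⟨k, hk⟩ := (strictlyMonotoneTuple_iff.mp hf).sameCycle_prod_apply (f i)
        (List.mem_ofFn.mpr ⟨i, rfl⟩) x
      have hmem : tupleProd f ∈ Subgroup.closure {α, tupleProd f} :=
        Subgroup.subset_closure (Set.mem_insert_of_mem _ rfl)
      exact ⟨tupleProd f ^ k, zpow_mem hmem k, hk⟩
  · rintro s (rfl | rfl) x
    · exact ⟨s, Subgroup.subset_closure (Or.inl rfl), rfl⟩
    · refine ⟨_, Subgroup.list_prod_mem _ fun τ hτ => ?_, rfl⟩
      obtain ⟨i, rfl⟩ := List.mem_ofFn.mp hτ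
      exact Subgroup.subset_closure (Or.inr ⟨i, rfl⟩)

end StrictlyMonotoneTuple

theorem exists_strictlyMonotoneTuple_tupleProd_eq {r : ℕ} {σ : Perm (Fin n)}
    (hσ : r + cycleCount σ = n) : ∃ f : Fin r → Perm (Fin n),
      StrictlyMonotoneTuple f ∧ tupleProd f = σ := by
  obtain ⟨l, hl, rfl⟩ := exists_strictlyMonotoneList_prod_eq σ
  obtain rfl : l.length = r := by have := hl.length_add_cycleCount_prod; omega
  exact ⟨l.get, strictlyMonotoneTuple_iff.mpr (by rwa [List.ofFn_get]),
    by rw [tupleProd, List.ofFn_get]⟩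

theorem card_strictlyMonotoneTuple_pairs (r : ℕ) (P : Perm (Fin n) → Perm (Fin n) → Prop) :
    Nat.card {p : Perm (Fin n) × (Fin r → Perm (Fin n)) //
      StrictlyMonotoneTuple p.2 ∧ P p.1 (tupleProd p.2)} =
    Nat.card {p : Perm (Fin n) × Perm (Fin n) // r + cycleCount p.2 = n ∧ P p.1 p.2} := by
  refine Nat.card_eq_of_bijective (fun p => ⟨(p.1.1, tupleProd p.1.2),
    p.2.1.length_add_cycleCount, p.2.2⟩) ⟨?_, ?_⟩
  · intro ⟨⟨α, f⟩, hf, _⟩ ⟨⟨β, g⟩, hg, _⟩ hfg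
    obtain ⟨hαβ, hfg⟩ := Prod.mk.inj (congrArg Subtype.val hfg)
    exact Subtype.ext (Prod.ext hαβ (hf.eq_of_tupleProd_eq hg hfg))
  · rintro ⟨⟨α, σ⟩, hσ, hP⟩
    obtain ⟨f, hf, rfl⟩ := exists_strictlyMonotoneTuple_tupleProd_eq hσ
    exact ⟨⟨(α, f), hf, hP⟩, rfl⟩

end StrictlyMonotone

/-- For partitions `μ, ν ⊢ n` and `g ≥ 0`, the number of pairs
`(α, β) ∈ S_n × S_n` with `α` of cycle type `μ`, `αβ` of cycle type `ν`,
`#μ + #β + #ν - n = 2 - 2g`, and `⟨α, β⟩` transitive on `[n]`, equals the strictly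
monotone double Hurwitz number `H^↑↑_g(μ,ν)`. -/
theorem card_constellations_eq_strictHurwitz (n g : ℕ) (hn : 1 ≤ n)
    (μ ν : n.Partition) :
    Nat.card {p : Equiv.Perm (Fin n) × Equiv.Perm (Fin n) //
      fullCycleType p.1 = μ.parts ∧
      fullCycleType (p.1 * p.2) = ν.parts ∧
      Multiset.card μ.parts + cycleCount p.2 + Multiset.card ν.parts + 2 * g = n + 2 ∧
      ActsTransitively {p.1, p.2}} = strictHurwitz n g μ ν := by
  -- `#μ, #ν ≥ 1`, so the truncated subtraction in `#μ + #ν + 2g - 2` is exact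
  have hμ := μ.card_parts_pos hn
  have hν := ν.card_parts_pos hn
  let Q : Equiv.Perm (Fin n) → Equiv.Perm (Fin n) → Prop := fun α β =>
    fullCycleType α = μ.parts ∧ fullCycleType (α * β) = ν.parts ∧ ActsTransitively {α, β}
  calc _ = Nat.card {p : Equiv.Perm (Fin n) × Equiv.Perm (Fin n) //
        Multiset.card μ.parts + Multiset.card ν.parts + 2 * g - 2 + cycleCount p.2 = n ∧
          Q p.1 p.2} :=
        Nat.card_congr <| Equiv.subtypeEquivRight fun p => by
          constructor
          · rintro ⟨h1, h2, h3, h4⟩; exact ⟨by omega, h1, h2, h4⟩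
          · rintro ⟨h3, h1, h2, h4⟩; exact ⟨h1, h2, by omega, h4⟩
    _ = _ := (card_strictlyMonotoneTuple_pairs _ Q).symm
    _ = strictHurwitz n g μ ν :=
        Nat.card_congr <| Equiv.subtypeEquivRight fun p => by
          constructor
          · rintro ⟨hf, h1, h2, h4⟩; exact ⟨h1, h2, hf, (hf.actsTransitively_iff p.1).mpr h4⟩
          · rintro ⟨h1, h2, hf, h4⟩; exact ⟨hf, h1, h2, (hf.actsTransitively_iff p.1).mp h4⟩
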